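/- arXiv:2309.03646 — 3 statements merged into one kernel-verified Lean document; each statement's English description precedes it below -/
import Mathlib

section
/- The projection of the Enneper boundary curve γ(θ;α) = (α cos θ − (α³/3) cos 3θ, −α sin θ − (α³/3) sin 3θ, α² cos 2θ) onto the x–y plane is injective on [0,2π) for 0 < α ≤ 1. -/
/-!
Write `c = cos (θ₁ - θ₂)`. Equal projections give `α (e^{-iθ₁} - e^{-iθ₂}) = (α³/3) (e^{3iθ₁} - e^{3iθ₂})`;
comparing squared lengths of the two chords, `α² (2 - 2c) = (α⁶/9) (2 - 2 cos 3(θ₁ - θ₂))`, which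
factors as `(1 - c) (9α² - α⁶ (2c + 1)²) = 0`. For `c < 1` we have `(2c + 1)² < 9`, so the second
factor is positive when `0 < α² ≤ 1`; hence `c = 1`, i.e. `θ₁ = θ₂` on `[0, 2π)`.
-/

open Real

/-- The projection onto the x–y plane of the Enneper boundary curve
`γ(θ;α) = (α cos θ − (α³/3) cos 3θ, −α sin θ − (α³/3) sin 3θ, α² cos 2θ)`. -/
noncomputable def enneperBdryProj (α θ : ℝ) : ℝ × ℝ :=
  (α * Real.cos θ - α ^ 3 / 3 * Real.cos (3 * θ),
   -(α * Real.sin θ) - α ^ 3 / 3 * Real.sin (3 * θ))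

theorem cos_sub_cos_sq_add_sin_sub_sin_sq (a b : ℝ) :
    (cos a - cos b) ^ 2 + (sin a - sin b) ^ 2 = 2 - 2 * cos (a - b) := by
  rw [cos_sub]
  linear_combination sin_sq_add_cos_sq a + sin_sq_add_cos_sq b

theorem cos_three_mul_sub_sq_add_sin_three_mul_sub_sq (a b : ℝ) :
    (cos (3 * a) - cos (3 * b)) ^ 2 + (sin (3 * a) - sin (3 * b)) ^ 2
      = 2 - 2 * (4 * cos (a - b) ^ 3 - 3 * cos (a - b)) := by
  rw [cos_sub_cos_sq_add_sin_sub_sin_sq, ← mul_sub, cos_three_mul]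

theorem one_sub_cos_mul_eq_zero_of_enneperBdryProj_eq {α a b : ℝ}
    (h : enneperBdryProj α a = enneperBdryProj α b) :
    (1 - cos (a - b)) * (9 * α ^ 2 - α ^ 6 * (2 * cos (a - b) + 1) ^ 2) = 0 := by
  obtain ⟨hx, hy⟩ := Prod.ext_iff.mp h
  simp only [enneperBdryProj] at hx hy
  have hx' : α * (cos a - cos b) = α ^ 3 / 3 * (cos (3 * a) - cos (3 * b)) := by linarith
  have hy' : α * (sin a - sin b) = -(α ^ 3 / 3) * (sin (3 * a) - sin (3 * b)) := by linarith
  linear_combination (9 / 2 : ℝ) * (congrArg (· ^ 2) hx' + congrArg (· ^ 2) hy'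
    - α ^ 2 * cos_sub_cos_sq_add_sin_sub_sin_sq a b
    + α ^ 6 / 9 * cos_three_mul_sub_sq_add_sin_three_mul_sub_sq a b)

theorem pow_six_mul_two_mul_add_one_sq_lt {α c : ℝ} (hα : α ≠ 0) (hα1 : α ^ 2 ≤ 1)
    (hc0 : -1 ≤ c) (hc1 : c < 1) :
    α ^ 6 * (2 * c + 1) ^ 2 < 9 * α ^ 2 := by
  have hsq : (2 * c + 1) ^ 2 < 9 := by nlinarith
  have hpow : α ^ 6 ≤ α ^ 2 := by
    simpa [← pow_mul] using pow_le_of_le_one (sq_nonneg α) hα1 (by norm_num : (3 : ℕ) ≠ 0)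
  calc α ^ 6 * (2 * c + 1) ^ 2 ≤ α ^ 2 * (2 * c + 1) ^ 2 := by gcongr
    _ < α ^ 2 * 9 := by gcongr
    _ = 9 * α ^ 2 := mul_comm _ _

theorem cos_sub_eq_one_of_enneperBdryProj_eq {α a b : ℝ} (hα : α ≠ 0) (hα1 : α ^ 2 ≤ 1)
    (h : enneperBdryProj α a = enneperBdryProj α b) : cos (a - b) = 1 := by
  by_contra hne
  have hlt := pow_six_mul_two_mul_add_one_sq_lt hα hα1 (neg_one_le_cos _)
    (lt_of_le_of_ne (cos_le_one _) hne)
  rcases mul_eq_zero.mp (one_sub_cos_mul_eq_zero_of_enneperBdryProj_eq h) with h1 | h2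
  · exact hne (by linarith)
  · linarith

/-- For `0 < α ≤ 1`, the projection of the Enneper boundary curve onto the x–y plane
is injective on `[0, 2π)`. -/
theorem enneper_boundary_projection_injective (α : ℝ) (hα0 : 0 < α) (hα1 : α ≤ 1) :
    Set.InjOn (enneperBdryProj α) (Set.Ico 0 (2 * π)) := by
  rintro a ⟨ha0, ha2⟩ b ⟨hb0, hb2⟩ h
  have hcos := cos_sub_eq_one_of_enneperBdryProj_eq hα0.ne' (pow_le_one₀ hα0.le hα1) h
  have hab := (cos_eq_one_iff_of_lt_of_lt (by linarith) (by linarith)).mp hcos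
  linarith
end

section
/- The nodoid parametrized by N(t,θ) = (x(t) cos θ, x(t) sin θ, z(t)) with x(t) = (cos t + √(cos²t + a))/(2|H|) and z(t) = (1/(2|H|)) ∫₀^t (cos τ + √(cos²τ + a)) cos τ / √(cos²τ + a) dτ is a surface of constant mean curvature with |mean curvature| = |H|, for every a > 0. -/
open Real

/-- Points of `ℝ³` modeled as triples. -/
abbrev R3 := ℝ × ℝ × ℝ

/-- Euclidean dot product on `ℝ³`. -/
def dot3 (u v : R3) : ℝ := u.1 * v.1 + u.2.1 * v.2.1 + u.2.2 * v.2.2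

/-- Cross product on `ℝ³`. -/
def cross3 (u v : R3) : R3 :=
  (u.2.1 * v.2.2 - u.2.2 * v.2.1, u.2.2 * v.1 - u.1 * v.2.2, u.1 * v.2.1 - u.2.1 * v.1)

/-- Euclidean norm on `ℝ³`. -/
noncomputable def norm3 (u : R3) : ℝ := Real.sqrt (dot3 u u)

/-- Partial derivative in the first coordinate. -/
noncomputable def pd1 {E : Type*} [NormedAddCommGroup E] [NormedSpace ℝ E]
    (f : ℝ × ℝ → E) (p : ℝ × ℝ) : E := deriv (fun s => f (s, p.2)) p.1

/-- Partial derivative in the second coordinate. -/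
noncomputable def pd2 {E : Type*} [NormedAddCommGroup E] [NormedSpace ℝ E]
    (f : ℝ × ℝ → E) (p : ℝ × ℝ) : E := deriv (fun s => f (p.1, s)) p.2

/-- First fundamental form coefficient `g₁₁ = ⟨X_x, X_x⟩`. -/
noncomputable def ffE (X : ℝ × ℝ → R3) (p : ℝ × ℝ) : ℝ := dot3 (pd1 X p) (pd1 X p)

/-- First fundamental form coefficient `g₁₂ = ⟨X_x, X_y⟩`. -/
noncomputable def ffF (X : ℝ × ℝ → R3) (p : ℝ × ℝ) : ℝ := dot3 (pd1 X p) (pd2 X p)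

/-- First fundamental form coefficient `g₂₂ = ⟨X_y, X_y⟩`. -/
noncomputable def ffG (X : ℝ × ℝ → R3) (p : ℝ × ℝ) : ℝ := dot3 (pd2 X p) (pd2 X p)

/-- The (unnormalized) normal vector `X_x × X_y`. -/
noncomputable def normalVec (X : ℝ × ℝ → R3) (p : ℝ × ℝ) : R3 := cross3 (pd1 X p) (pd2 X p)

/-- The unit normal `N = (X_x × X_y)/‖X_x × X_y‖`. -/
noncomputable def unitNormal (X : ℝ × ℝ → R3) (p : ℝ × ℝ) : R3 :=
  (norm3 (normalVec X p))⁻¹ • normalVec X p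

/-- Second fundamental form coefficient `h₁₁ = ⟨X_xx, N⟩`. -/
noncomputable def sfh11 (X : ℝ × ℝ → R3) (p : ℝ × ℝ) : ℝ :=
  dot3 (pd1 (pd1 X) p) (unitNormal X p)

/-- Second fundamental form coefficient `h₁₂ = ⟨X_xy, N⟩`. -/
noncomputable def sfh12 (X : ℝ × ℝ → R3) (p : ℝ × ℝ) : ℝ :=
  dot3 (pd2 (pd1 X) p) (unitNormal X p)

/-- Second fundamental form coefficient `h₂₂ = ⟨X_yy, N⟩`. -/
noncomputable def sfh22 (X : ℝ × ℝ → R3) (p : ℝ × ℝ) : ℝ :=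
  dot3 (pd2 (pd2 X) p) (unitNormal X p)

/-- Mean curvature `H = (h₁₁g₂₂ − 2h₁₂g₁₂ + h₂₂g₁₁)/(2(g₁₁g₂₂ − g₁₂²))`. -/
noncomputable def meanCurv (X : ℝ × ℝ → R3) (p : ℝ × ℝ) : ℝ :=
  (sfh11 X p * ffG X p - 2 * sfh12 X p * ffF X p + sfh22 X p * ffE X p) /
    (2 * (ffE X p * ffG X p - ffF X p ^ 2))

/-- Gaussian curvature `K = (h₁₁h₂₂ − h₁₂²)/(g₁₁g₂₂ − g₁₂²)`. -/
noncomputable def gaussCurv (X : ℝ × ℝ → R3) (p : ℝ × ℝ) : ℝ :=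
  (sfh11 X p * sfh22 X p - sfh12 X p ^ 2) / (ffE X p * ffG X p - ffF X p ^ 2)

/-- Surface area density `√(g₁₁g₂₂ − g₁₂²) = ‖X_x × X_y‖`. -/
noncomputable def areaDensity (X : ℝ × ℝ → R3) (p : ℝ × ℝ) : ℝ := norm3 (normalVec X p)

/-- Laplace–Beltrami operator of the surface `X` applied to `u`,
`Δu = (1/√det g) [∂₁((g₂₂ ∂₁u − g₁₂ ∂₂u)/√det g) + ∂₂((g₁₁ ∂₂u − g₁₂ ∂₁u)/√det g)]`. -/
noncomputable def laplaceBeltrami (X : ℝ × ℝ → R3) (u : ℝ × ℝ → ℝ) (p : ℝ × ℝ) : ℝ :=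
  (pd1 (fun q => (ffG X q * pd1 u q - ffF X q * pd2 u q) / areaDensity X q) p +
   pd2 (fun q => (ffE X q * pd2 u q - ffF X q * pd1 u q) / areaDensity X q) p) /
    areaDensity X p

/-- Radial component `x(t) = (cos t + √(cos²t + a))/(2|H|)` of the nodary curve. -/
noncomputable def nodx (H a t : ℝ) : ℝ :=
  (Real.cos t + Real.sqrt (Real.cos t ^ 2 + a)) / (2 * |H|)

/-- Height component
`z(t) = (1/(2|H|)) ∫₀ᵗ (cos τ + √(cos²τ + a)) cos τ / √(cos²τ + a) dτ` of the nodary curve. -/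
noncomputable def nodz (H a t : ℝ) : ℝ :=
  (1 / (2 * |H|)) *
    ∫ τ in (0 : ℝ)..t,
      (Real.cos τ + Real.sqrt (Real.cos τ ^ 2 + a)) * Real.cos τ /
        Real.sqrt (Real.cos τ ^ 2 + a)

/-- The nodoid `N(t,θ) = (x(t) cos θ, x(t) sin θ, z(t))`, the surface of revolution of
the nodary curve around the z-axis. -/
noncomputable def nodoid (H a : ℝ) (p : ℝ × ℝ) : R3 :=
  (nodx H a p.1 * Real.cos p.2, nodx H a p.1 * Real.sin p.2, nodz H a p.1)

/-! Along the nodary `x' = -(x / S) sin t` and `z' = (x / S) cos t`, where `S = √(cos² t + a)`: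
the profile is parametrised by its tangent angle `t + π/2` with speed `x / S`, so its curvature is
`S / x`, while the curvature of the parallels is `cos t / x`. Their mean `(cos t + S) / (2x)` is
`|H|` by the very definition of `x`. -/

noncomputable def surfaceOfRevolution (x z : ℝ → ℝ) (p : ℝ × ℝ) : R3 :=
  (x p.1 * cos p.2, x p.1 * sin p.2, z p.1)

section SurfaceOfRevolution

variable {x z x' z' x'' z'' : ℝ → ℝ}

theorem pd1_surfaceOfRevolution (hx : ∀ t, HasDerivAt x (x' t) t)
    (hz : ∀ t, HasDerivAt z (z' t) t) :
    pd1 (surfaceOfRevolution x z) = surfaceOfRevolution x' z' := by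
  funext p
  exact (((hx p.1).mul_const (cos p.2)).prodMk
    (((hx p.1).mul_const (sin p.2)).prodMk (hz p.1))).deriv

theorem pd2_surfaceOfRevolution :
    pd2 (surfaceOfRevolution x z) = fun p => (-(x p.1 * sin p.2), x p.1 * cos p.2, 0) := by
  funext p
  have h := ((hasDerivAt_cos p.2).const_mul (x p.1)).prodMk
    (((hasDerivAt_sin p.2).const_mul (x p.1)).prodMk (hasDerivAt_const p.2 (z p.1)))
  rw [mul_neg] at h
  exact h.deriv

theorem pd2_pd2_surfaceOfRevolution (p : ℝ × ℝ) :
    pd2 (pd2 (surfaceOfRevolution x z)) p = (-(x p.1 * cos p.2), -(x p.1 * sin p.2), 0) := by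
  rw [pd2_surfaceOfRevolution]
  have h := ((hasDerivAt_sin p.2).const_mul (x p.1)).neg.prodMk
    (((hasDerivAt_cos p.2).const_mul (x p.1)).prodMk (hasDerivAt_const p.2 (0 : ℝ)))
  rw [mul_neg] at h
  exact h.deriv

theorem ffG_surfaceOfRevolution (p : ℝ × ℝ) : ffG (surfaceOfRevolution x z) p = x p.1 ^ 2 := by
  simp only [ffG, pd2_surfaceOfRevolution, dot3]
  linear_combination x p.1 ^ 2 * cos_sq_add_sin_sq p.2

section Forms

variable (hx : ∀ t, HasDerivAt x (x' t) t) (hz : ∀ t, HasDerivAt z (z' t) t)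
include hx hz

theorem ffE_surfaceOfRevolution (p : ℝ × ℝ) :
    ffE (surfaceOfRevolution x z) p = x' p.1 ^ 2 + z' p.1 ^ 2 := by
  simp only [ffE, pd1_surfaceOfRevolution hx hz, surfaceOfRevolution, dot3]
  linear_combination x' p.1 ^ 2 * cos_sq_add_sin_sq p.2

theorem ffF_surfaceOfRevolution (p : ℝ × ℝ) : ffF (surfaceOfRevolution x z) p = 0 := by
  simp only [ffF, pd1_surfaceOfRevolution hx hz, pd2_surfaceOfRevolution, surfaceOfRevolution,
    dot3]
  ring

theorem normalVec_surfaceOfRevolution (p : ℝ × ℝ) :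
    normalVec (surfaceOfRevolution x z) p =
      x p.1 • (-(z' p.1 * cos p.2), -(z' p.1 * sin p.2), x' p.1) := by
  simp only [normalVec, pd1_surfaceOfRevolution hx hz, pd2_surfaceOfRevolution,
    surfaceOfRevolution, cross3, Prod.smul_mk, smul_eq_mul, Prod.mk.injEq]
  refine ⟨by ring, by ring, ?_⟩
  linear_combination x p.1 * x' p.1 * cos_sq_add_sin_sq p.2

theorem unitNormal_surfaceOfRevolution {t : ℝ} (θ : ℝ) (hxt : 0 < x t) :
    unitNormal (surfaceOfRevolution x z) (t, θ) =
      (√(x' t ^ 2 + z' t ^ 2))⁻¹ • (-(z' t * cos θ), -(z' t * sin θ), x' t) := by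
  have hdot : dot3 (normalVec (surfaceOfRevolution x z) (t, θ))
      (normalVec (surfaceOfRevolution x z) (t, θ)) = x t ^ 2 * (x' t ^ 2 + z' t ^ 2) := by
    simp only [normalVec_surfaceOfRevolution hx hz, dot3, Prod.smul_mk, smul_eq_mul]
    linear_combination x t ^ 2 * z' t ^ 2 * cos_sq_add_sin_sq θ
  rw [unitNormal, norm3, hdot, sqrt_mul (sq_nonneg _), sqrt_sq hxt.le,
    normalVec_surfaceOfRevolution hx hz, smul_smul]
  congr 1
  field_simp

theorem meanCurv_surfaceOfRevolution (hx' : ∀ t, HasDerivAt x' (x'' t) t)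
    (hz' : ∀ t, HasDerivAt z' (z'' t) t) {t : ℝ} (θ : ℝ) (hxt : 0 < x t)
    (hreg : 0 < x' t ^ 2 + z' t ^ 2) :
    meanCurv (surfaceOfRevolution x z) (t, θ) =
      ((x' t * z'' t - z' t * x'' t) / √(x' t ^ 2 + z' t ^ 2) ^ 3 +
        z' t / (x t * √(x' t ^ 2 + z' t ^ 2))) / 2 := by
  have hs : 0 < √(x' t ^ 2 + z' t ^ 2) := sqrt_pos.2 hreg
  have hs2 : √(x' t ^ 2 + z' t ^ 2) ^ 2 = x' t ^ 2 + z' t ^ 2 := sq_sqrt hreg.le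
  have hN := unitNormal_surfaceOfRevolution hx hz θ hxt
  have h11 : sfh11 (surfaceOfRevolution x z) (t, θ) =
      (x' t * z'' t - z' t * x'' t) / √(x' t ^ 2 + z' t ^ 2) := by
    simp only [sfh11, pd1_surfaceOfRevolution hx hz, pd1_surfaceOfRevolution hx' hz', hN,
      surfaceOfRevolution, dot3, Prod.smul_mk, smul_eq_mul]
    field_simp
    linear_combination -(x'' t * z' t) * cos_sq_add_sin_sq θ
  have h12 : sfh12 (surfaceOfRevolution x z) (t, θ) = 0 := by
    simp only [sfh12, pd1_surfaceOfRevolution hx hz, pd2_surfaceOfRevolution, hN, dot3,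
      Prod.smul_mk, smul_eq_mul]
    ring
  have h22 : sfh22 (surfaceOfRevolution x z) (t, θ) = x t * z' t / √(x' t ^ 2 + z' t ^ 2) := by
    simp only [sfh22, pd2_pd2_surfaceOfRevolution, hN, dot3, Prod.smul_mk, smul_eq_mul]
    field_simp
    linear_combination x t * z' t * cos_sq_add_sin_sq θ
  set s := √(x' t ^ 2 + z' t ^ 2)
  rw [meanCurv, h11, h12, h22, ffE_surfaceOfRevolution hx hz, ffF_surfaceOfRevolution hx hz,
    ffG_surfaceOfRevolution, ← hs2]
  field_simp
  ring

end Forms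

end SurfaceOfRevolution

/-- The profile is parametrised by its tangent angle `t + π/2` with speed `v`, so its curvature is
`1 / v t` whatever `v'` is; the parallel circles contribute `cos t / x t`. -/
theorem meanCurv_surfaceOfRevolution_of_tangent_angle {x z v : ℝ → ℝ}
    (hv : Differentiable ℝ v) (hx : ∀ t, HasDerivAt x (-(v t * sin t)) t)
    (hz : ∀ t, HasDerivAt z (v t * cos t) t)
    {t : ℝ} (θ : ℝ) (hxt : 0 < x t) (hvt : 0 < v t) :
    meanCurv (surfaceOfRevolution x z) (t, θ) = (1 / v t + cos t / x t) / 2 := by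
  have hx' (t : ℝ) := ((hv t).hasDerivAt.mul (hasDerivAt_sin t)).neg
  have hz' (t : ℝ) := (hv t).hasDerivAt.mul (hasDerivAt_cos t)
  have hspeed : (-(v t * sin t)) ^ 2 + (v t * cos t) ^ 2 = v t ^ 2 := by
    linear_combination v t ^ 2 * sin_sq_add_cos_sq t
  rw [meanCurv_surfaceOfRevolution hx hz hx' hz' θ hxt (by rw [hspeed]; positivity), hspeed,
    sqrt_sq hvt.le]
  field_simp
  linear_combination x t * v t * sin_sq_add_cos_sq t

section Nodary

variable {H a : ℝ}

theorem cos_add_sqrt_cos_sq_add_pos (ha : 0 < a) (t : ℝ) : 0 < cos t + √(cos t ^ 2 + a) := by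
  have hcos : |cos t| < √(cos t ^ 2 + a) := lt_sqrt_of_sq_lt (by rw [sq_abs]; linarith)
  linarith [neg_abs_le (cos t)]

theorem nodx_pos (hH : H ≠ 0) (ha : 0 < a) (t : ℝ) : 0 < nodx H a t :=
  div_pos (cos_add_sqrt_cos_sq_add_pos ha t) (by positivity)

theorem hasDerivAt_nodx (ha : 0 < a) (t : ℝ) :
    HasDerivAt (nodx H a) (-(nodx H a t / √(cos t ^ 2 + a) * sin t)) t := by
  have hS : 0 < √(cos t ^ 2 + a) := sqrt_pos.2 (by positivity)
  refine (((hasDerivAt_cos t).add (((hasDerivAt_cos t).pow 2).add_const a |>.sqrt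
    (by positivity : 0 < cos t ^ 2 + a).ne')).div_const (2 * |H|)).congr_deriv ?_
  simp only [nodx, Pi.pow_apply]
  field_simp
  ring

theorem hasDerivAt_nodz (ha : 0 < a) (t : ℝ) :
    HasDerivAt (nodz H a) (nodx H a t / √(cos t ^ 2 + a) * cos t) t := by
  have hS (τ : ℝ) : √(cos τ ^ 2 + a) ≠ 0 := (sqrt_pos.2 (by positivity)).ne'
  have hcont :
      Continuous fun τ => (cos τ + √(cos τ ^ 2 + a)) * cos τ / √(cos τ ^ 2 + a) := by
    fun_prop (disch := exact hS _)
  refine ((intervalIntegral.integral_hasDerivAt_right (hcont.intervalIntegrable 0 t)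
    (hcont.stronglyMeasurableAtFilter _ _) hcont.continuousAt).const_mul
      (1 / (2 * |H|))).congr_deriv ?_
  unfold nodx
  ring

end Nodary

/-- The nodoid is a surface of constant mean curvature with `|mean curvature| = |H|`,
for every `a > 0` and `H ≠ 0`. -/
theorem nodoid_constant_mean_curvature (H a : ℝ) (hH : H ≠ 0) (ha : 0 < a) :
    ∀ p : ℝ × ℝ, |meanCurv (nodoid H a) p| = |H| := by
  rintro ⟨t, θ⟩
  have hS (t : ℝ) : 0 < √(cos t ^ 2 + a) := sqrt_pos.2 (by positivity)
  have hv : Differentiable ℝ fun t => nodx H a t / √(cos t ^ 2 + a) := fun t =>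
    (hasDerivAt_nodx ha t).differentiableAt.div (by fun_prop (disch := positivity)) (hS t).ne'
  have hx := nodx_pos hH ha t
  rw [show nodoid H a = surfaceOfRevolution (nodx H a) (nodz H a) from rfl,
    meanCurv_surfaceOfRevolution_of_tangent_angle hv (hasDerivAt_nodx ha) (hasDerivAt_nodz ha)
      θ hx (div_pos hx (hS t))]
  have hH' : 0 < |H| := abs_pos.2 hH
  have hsum := cos_add_sqrt_cos_sq_add_pos ha t
  unfold nodx
  field_simp
  rw [add_comm (√_), mul_div_assoc, div_self hsum.ne', mul_one, abs_abs]
end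

section
/- For each fixed vector v ∈ ℝ³, the function ψ = ⟨v, N⟩ on a nodoid N_{t₀} (with N the unit normal) satisfies the Jacobi equation Δψ + ‖S‖²ψ = 0; and ψ = ⟨e₃, N⟩ vanishes on the boundary ∂N_{t₀} if and only if t₀ ∈ πℕ, while ψ = ⟨e_i, N⟩ for i = 1,2 vanishes on ∂N_{t₀} if and only if t₀ ∈ π/2 + πℕ. -/
/-!
Parametrize the profile of a surface of revolution by the angle `t` of its normal, so that its
velocity is `φ t • (-sin t, cos t)`. Then the fundamental forms are diagonal (`E = φ²`, `G = x²`),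
`N = (cos t cos θ, cos t sin θ, sin t)` is (minus) the unit normal and the principal curvatures are
`1/φ` and `cos t / x`. The nodary curve satisfies `1/φ + cos t / x = 2|H|`, i.e. the nodoid has
constant mean curvature `|H|`. For constant mean curvature `x/φ = 2|H| x - cos t`, and a direct
computation in coordinates gives `Δ⟨v,N⟩ = -(1/φ² + cos² t / x²) ⟨v,N⟩ = -(4H² - 2K) ⟨v,N⟩`.
The boundary statements reduce to `⟨e₃,N⟩ = sin t` and `⟨eᵢ,N⟩ = cos t · (cos θ, sin θ)ᵢ`.
-/
open Real

/-- The unit normal field `N(t,θ) = (cos t cos θ, cos t sin θ, sin t)` on the nodoid. -/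
noncomputable def nodN (p : ℝ × ℝ) : R3 :=
  (Real.cos p.1 * Real.cos p.2, Real.cos p.1 * Real.sin p.2, Real.sin p.1)

/-- The standard basis vectors of `ℝ³`. -/
def e1 : R3 := (1, 0, 0)
def e2 : R3 := (0, 1, 0)
def e3 : R3 := (0, 0, 1)

noncomputable def revolution (x z : ℝ → ℝ) (p : ℝ × ℝ) : R3 :=
  (x p.1 * cos p.2, x p.1 * sin p.2, z p.1)

/-- The profile `t ↦ (x t, z t)` has velocity `φ t • (-sin t, cos t)`: `t` is the angle of its
normal. -/
structure IsAngleProfile (x z φ : ℝ → ℝ) : Prop where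
  pos : ∀ t, 0 < x t
  speed_pos : ∀ t, 0 < φ t
  hasDerivAt_fst : ∀ t, HasDerivAt x (-sin t * φ t) t
  hasDerivAt_snd : ∀ t, HasDerivAt z (cos t * φ t) t
  differentiable_speed : Differentiable ℝ φ

theorem HasDerivAt.const_dot3 {f : ℝ → R3} {f' : R3} {t : ℝ} (v : R3)
    (hf : HasDerivAt f f' t) : HasDerivAt (fun s => dot3 v (f s)) (dot3 v f') t := by
  have h1 : HasDerivAt (fun s => (f s).1) f'.1 t :=
    (hasFDerivAt_fst (p := f t)).comp_hasDerivAt t hf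
  have h2 : HasDerivAt (fun s => (f s).2) f'.2 t :=
    (hasFDerivAt_snd (p := f t)).comp_hasDerivAt t hf
  have h21 : HasDerivAt (fun s => (f s).2.1) f'.2.1 t :=
    (hasFDerivAt_fst (p := (f t).2)).comp_hasDerivAt (f := fun s => (f s).2) t h2
  have h22 : HasDerivAt (fun s => (f s).2.2) f'.2.2 t :=
    (hasFDerivAt_snd (p := (f t).2)).comp_hasDerivAt (f := fun s => (f s).2) t h2
  exact ((h1.const_mul _).add (h21.const_mul _)).add (h22.const_mul _)

theorem dot3_nodN_self (p : ℝ × ℝ) : dot3 (nodN p) (nodN p) = 1 := by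
  simp only [dot3, nodN]
  linear_combination cos p.1 ^ 2 * sin_sq_add_cos_sq p.2 + sin_sq_add_cos_sq p.1

theorem hasDerivAt_nodN_fst (p : ℝ × ℝ) :
    HasDerivAt (fun s => nodN (s, p.2)) (-sin p.1 * cos p.2, -sin p.1 * sin p.2, cos p.1) p.1 :=
  show HasDerivAt (fun s => (cos s * cos p.2, cos s * sin p.2, sin s)) _ _ from
    ((hasDerivAt_cos _).mul_const _).prodMk
      (((hasDerivAt_cos _).mul_const _).prodMk (hasDerivAt_sin _))

theorem hasDerivAt_nodN_snd (p : ℝ × ℝ) :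
    HasDerivAt (fun s => nodN (p.1, s)) (-(cos p.1 * sin p.2), cos p.1 * cos p.2, 0) p.2 :=
  show HasDerivAt (fun s => (cos p.1 * cos s, cos p.1 * sin s, sin p.1)) _ _ from
    (((hasDerivAt_cos _).const_mul _).congr_deriv (by ring)).prodMk
      (((hasDerivAt_sin _).const_mul _).prodMk (hasDerivAt_const _ _))

theorem pd1_dot3_nodN (v : R3) (p : ℝ × ℝ) :
    pd1 (fun q => dot3 v (nodN q)) p = dot3 v (-sin p.1 * cos p.2, -sin p.1 * sin p.2, cos p.1) :=
  ((hasDerivAt_nodN_fst p).const_dot3 v).deriv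

theorem pd2_dot3_nodN (v : R3) (p : ℝ × ℝ) :
    pd2 (fun q => dot3 v (nodN q)) p = dot3 v (-(cos p.1 * sin p.2), cos p.1 * cos p.2, 0) :=
  ((hasDerivAt_nodN_snd p).const_dot3 v).deriv

theorem pd1_mul_pd1_dot3_nodN {g : ℝ → ℝ} {g' : ℝ} (v : R3) {p : ℝ × ℝ}
    (hg : HasDerivAt g g' p.1) :
    pd1 (fun q => g q.1 * pd1 (fun q => dot3 v (nodN q)) q) p =
      g' * dot3 v (-sin p.1 * cos p.2, -sin p.1 * sin p.2, cos p.1) - g p.1 * dot3 v (nodN p) := by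
  have hT : HasDerivAt (fun s => (-sin s * cos p.2, -sin s * sin p.2, cos s)) (-nodN p) p.1 :=
    show HasDerivAt _ (-(cos p.1 * cos p.2), -(cos p.1 * sin p.2), -sin p.1) _ from
      (((hasDerivAt_sin _).neg.mul_const _).congr_deriv (by ring)).prodMk
        ((((hasDerivAt_sin _).neg.mul_const _).congr_deriv (by ring)).prodMk (hasDerivAt_cos _))
  simp only [pd1_dot3_nodN]
  rw [pd1]
  refine (hg.mul (hT.const_dot3 v)).deriv.trans ?_
  simp only [dot3, nodN, Prod.neg_mk]
  ring

theorem pd2_mul_pd2_dot3_nodN (g : ℝ → ℝ) (v : R3) (p : ℝ × ℝ) :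
    pd2 (fun q => g q.1 * pd2 (fun q => dot3 v (nodN q)) q) p =
      g p.1 * dot3 v (-(cos p.1 * cos p.2), -(cos p.1 * sin p.2), 0) := by
  have hT : HasDerivAt (fun s => (-(cos p.1 * sin s), cos p.1 * cos s, (0 : ℝ)))
      (-(cos p.1 * cos p.2), -(cos p.1 * sin p.2), 0) p.2 :=
    (((hasDerivAt_sin _).const_mul _).neg).prodMk
      ((((hasDerivAt_cos _).const_mul _).congr_deriv (by ring)).prodMk (hasDerivAt_const _ _))
  simp only [pd2_dot3_nodN]
  rw [pd2]
  dsimp only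
  exact ((hT.const_dot3 v).const_mul _).deriv

section Revolution

variable {x z φ : ℝ → ℝ}

theorem pd1_revolution {x' z' : ℝ} {p : ℝ × ℝ} (hx : HasDerivAt x x' p.1)
    (hz : HasDerivAt z z' p.1) :
    pd1 (revolution x z) p = (x' * cos p.2, x' * sin p.2, z') :=
  HasDerivAt.deriv <| show HasDerivAt (fun s => (x s * cos p.2, x s * sin p.2, z s)) _ _ from
    (hx.mul_const _).prodMk ((hx.mul_const _).prodMk hz)

theorem pd2_revolution (p : ℝ × ℝ) :
    pd2 (revolution x z) p = (-(x p.1 * sin p.2), x p.1 * cos p.2, 0) :=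
  HasDerivAt.deriv <|
    show HasDerivAt (fun s => (x p.1 * cos s, x p.1 * sin s, z p.1)) _ _ from
      (((hasDerivAt_cos _).const_mul _).congr_deriv (by ring)).prodMk
        (((hasDerivAt_sin _).const_mul _).prodMk (hasDerivAt_const _ _))

theorem ffG_revolution (p : ℝ × ℝ) : ffG (revolution x z) p = x p.1 ^ 2 := by
  rw [ffG, pd2_revolution, dot3]
  linear_combination x p.1 ^ 2 * sin_sq_add_cos_sq p.2

theorem pd2_pd2_revolution (p : ℝ × ℝ) :
    pd2 (pd2 (revolution x z)) p = (-(x p.1 * cos p.2), -(x p.1 * sin p.2), 0) := by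
  have h : (fun s => pd2 (revolution x z) (p.1, s)) =
      fun s => (-(x p.1 * sin s), x p.1 * cos s, 0) := funext fun s => pd2_revolution (p.1, s)
  rw [pd2, h]
  exact ((((hasDerivAt_sin _).const_mul _).neg).prodMk
    ((((hasDerivAt_cos _).const_mul _).congr_deriv (by ring)).prodMk
      (hasDerivAt_const _ _))).deriv

namespace IsAngleProfile

theorem pd1_eq (hP : IsAngleProfile x z φ) :
    pd1 (revolution x z) = revolution (fun t => -sin t * φ t) (fun t => cos t * φ t) :=
  funext fun p => pd1_revolution (hP.hasDerivAt_fst p.1) (hP.hasDerivAt_snd p.1)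

theorem ffE_eq (hP : IsAngleProfile x z φ) (p : ℝ × ℝ) : ffE (revolution x z) p = φ p.1 ^ 2 := by
  rw [ffE, hP.pd1_eq, revolution, dot3]
  linear_combination φ p.1 ^ 2 * (sin p.1 ^ 2 * sin_sq_add_cos_sq p.2 + sin_sq_add_cos_sq p.1)

theorem ffF_eq (hP : IsAngleProfile x z φ) (p : ℝ × ℝ) : ffF (revolution x z) p = 0 := by
  rw [ffF, hP.pd1_eq, pd2_revolution, revolution, dot3]
  ring

theorem normalVec_eq (hP : IsAngleProfile x z φ) (p : ℝ × ℝ) :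
    normalVec (revolution x z) p = -(x p.1 * φ p.1) • nodN p := by
  rw [normalVec, hP.pd1_eq, pd2_revolution, revolution, cross3, nodN]
  simp only [Prod.smul_mk, smul_eq_mul, Prod.mk.injEq]
  refine ⟨by ring, by ring, ?_⟩
  linear_combination -(x p.1 * φ p.1 * sin p.1) * sin_sq_add_cos_sq p.2

theorem areaDensity_eq (hP : IsAngleProfile x z φ) (p : ℝ × ℝ) :
    areaDensity (revolution x z) p = x p.1 * φ p.1 := by
  have hxφ : 0 < x p.1 * φ p.1 := mul_pos (hP.pos _) (hP.speed_pos _)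
  have h : dot3 (-(x p.1 * φ p.1) • nodN p) (-(x p.1 * φ p.1) • nodN p) =
      (x p.1 * φ p.1) ^ 2 := by
    rw [← mul_one ((x p.1 * φ p.1) ^ 2), ← dot3_nodN_self p]
    simp only [dot3, Prod.smul_fst, Prod.smul_snd, smul_eq_mul]
    ring
  rw [areaDensity, hP.normalVec_eq, norm3, h, sqrt_sq hxφ.le]

theorem unitNormal_eq (hP : IsAngleProfile x z φ) (p : ℝ × ℝ) :
    unitNormal (revolution x z) p = -nodN p := by
  have hxφ : x p.1 * φ p.1 ≠ 0 := (mul_pos (hP.pos _) (hP.speed_pos _)).ne'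
  rw [unitNormal, ← areaDensity, hP.areaDensity_eq, hP.normalVec_eq, smul_smul, inv_mul_eq_div,
    neg_div_self hxφ, neg_one_smul]

theorem sfh11_eq (hP : IsAngleProfile x z φ) (p : ℝ × ℝ) : sfh11 (revolution x z) p = φ p.1 := by
  have hφ := (hP.differentiable_speed p.1).hasDerivAt
  have hx' : HasDerivAt (fun t => -sin t * φ t) (-cos p.1 * φ p.1 + -sin p.1 * deriv φ p.1) p.1 :=
    (hasDerivAt_sin _).neg.mul hφ
  have hz' : HasDerivAt (fun t => cos t * φ t) (-sin p.1 * φ p.1 + cos p.1 * deriv φ p.1) p.1 :=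
    (hasDerivAt_cos _).mul hφ
  rw [sfh11, hP.pd1_eq, pd1_revolution hx' hz', hP.unitNormal_eq, nodN]
  simp only [dot3, Prod.neg_mk]
  linear_combination φ p.1 * (cos p.1 ^ 2 * sin_sq_add_cos_sq p.2 + sin_sq_add_cos_sq p.1) +
    cos p.1 * sin p.1 * deriv φ p.1 * sin_sq_add_cos_sq p.2

theorem sfh12_eq (hP : IsAngleProfile x z φ) (p : ℝ × ℝ) : sfh12 (revolution x z) p = 0 := by
  rw [sfh12, hP.pd1_eq, pd2_revolution, hP.unitNormal_eq, nodN]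
  simp only [dot3, Prod.neg_mk]
  ring

theorem sfh22_eq (hP : IsAngleProfile x z φ) (p : ℝ × ℝ) :
    sfh22 (revolution x z) p = x p.1 * cos p.1 := by
  rw [sfh22, pd2_pd2_revolution, hP.unitNormal_eq, nodN]
  simp only [dot3, Prod.neg_mk]
  linear_combination x p.1 * cos p.1 * sin_sq_add_cos_sq p.2

theorem gaussCurv_eq (hP : IsAngleProfile x z φ) (p : ℝ × ℝ) :
    gaussCurv (revolution x z) p = cos p.1 / (x p.1 * φ p.1) := by
  have hx := (hP.pos p.1).ne'
  have hφ := (hP.speed_pos p.1).ne'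
  rw [gaussCurv, hP.sfh11_eq, hP.sfh12_eq, hP.sfh22_eq, hP.ffE_eq, hP.ffF_eq, ffG_revolution]
  field_simp
  ring

theorem meanCurv_eq (hP : IsAngleProfile x z φ) (p : ℝ × ℝ) :
    meanCurv (revolution x z) p = (1 / φ p.1 + cos p.1 / x p.1) / 2 := by
  have hx := (hP.pos p.1).ne'
  have hφ := (hP.speed_pos p.1).ne'
  rw [meanCurv, hP.sfh11_eq, hP.sfh12_eq, hP.sfh22_eq, hP.ffE_eq, hP.ffF_eq, ffG_revolution]
  field_simp
  ring

theorem laplaceBeltrami_eq (hP : IsAngleProfile x z φ) (u : ℝ × ℝ → ℝ) (p : ℝ × ℝ) :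
    laplaceBeltrami (revolution x z) u p =
      (pd1 (fun q => x q.1 / φ q.1 * pd1 u q) p + pd2 (fun q => φ q.1 / x q.1 * pd2 u q) p) /
        (x p.1 * φ p.1) := by
  have h (q : ℝ × ℝ) : x q.1 ≠ 0 ∧ φ q.1 ≠ 0 := ⟨(hP.pos q.1).ne', (hP.speed_pos q.1).ne'⟩
  simp only [laplaceBeltrami, hP.ffE_eq, hP.ffF_eq, ffG_revolution, hP.areaDensity_eq, zero_mul,
    sub_zero]
  congr 3 <;> ext q <;> field_simp [(h q).1, (h q).2]

end IsAngleProfile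

end Revolution

/-- `Δu + ‖S‖²u = 0`, with `‖S‖² = 4H² − 2K` when `H` is the mean curvature of `X`. -/
def IsJacobiField (X : ℝ × ℝ → R3) (H : ℝ) (u : ℝ × ℝ → ℝ) : Prop :=
  ∀ p, laplaceBeltrami X u p + (4 * H ^ 2 - 2 * gaussCurv X p) * u p = 0

theorem IsAngleProfile.isJacobiField_dot3_nodN {x z φ : ℝ → ℝ} {h : ℝ}
    (hP : IsAngleProfile x z φ) (hH : ∀ p, meanCurv (revolution x z) p = h) (v : R3) :
    IsJacobiField (revolution x z) h (fun q => dot3 v (nodN q)) := by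
  intro p
  have hx := (hP.pos p.1).ne'
  have hφ := (hP.speed_pos p.1).ne'
  -- constant mean curvature is what lets us differentiate `x / φ`
  have hx_div_φ : (fun t => x t / φ t) = fun t => 2 * h * x t - cos t := by
    ext t
    have hx := (hP.pos t).ne'
    have hφ := (hP.speed_pos t).ne'
    rw [← hH (t, 0), hP.meanCurv_eq]
    field_simp
    ring
  have hg : HasDerivAt (fun t => x t / φ t) (2 * h * (-sin p.1 * φ p.1) + sin p.1) p.1 := by
    rw [hx_div_φ]
    exact (((hP.hasDerivAt_fst p.1).const_mul (2 * h)).sub (hasDerivAt_cos p.1)).congr_deriv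
      (sub_neg_eq_add _ _)
  have hh : h = (1 / φ p.1 + cos p.1 / x p.1) / 2 := by rw [← hH p, hP.meanCurv_eq]
  rw [hP.laplaceBeltrami_eq, pd1_mul_pd1_dot3_nodN v hg, pd2_mul_pd2_dot3_nodN (fun t => φ t / x t),
    hP.gaussCurv_eq, hh]
  simp only [dot3, nodN]
  field_simp
  linear_combination
    4 * φ p.1 ^ 2 * cos p.1 * (v.1 * cos p.2 + v.2.1 * sin p.2) * sin_sq_add_cos_sq p.1

section Nodary

variable {H a : ℝ}

theorem abs_cos_lt_sqrt_cos_sq_add (ha : 0 < a) (t : ℝ) : |cos t| < √(cos t ^ 2 + a) := by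
  rw [← sqrt_sq_eq_abs]
  exact sqrt_lt_sqrt (sq_nonneg _) (lt_add_of_pos_right _ ha)

theorem hasDerivAt_sqrt_cos_sq_add (ha : 0 < a) (t : ℝ) :
    HasDerivAt (fun t => √(cos t ^ 2 + a)) (-(cos t * sin t) / √(cos t ^ 2 + a)) t := by
  have hpos : 0 < cos t ^ 2 + a := by positivity
  have h : HasDerivAt (fun t => cos t ^ 2 + a) (2 * cos t ^ 1 * -sin t) t :=
    ((hasDerivAt_cos t).pow 2).add_const a
  refine (h.sqrt hpos.ne').congr_deriv ?_
  field_simp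

/-- The speed `φ` of the nodary curve `(nodx H a, nodz H a)` with respect to the normal angle. -/
noncomputable def nodSpeed (H a t : ℝ) : ℝ :=
  (cos t + √(cos t ^ 2 + a)) / (2 * |H| * √(cos t ^ 2 + a))

theorem isAngleProfile_nodary (hH : H ≠ 0) (ha : 0 < a) :
    IsAngleProfile (nodx H a) (nodz H a) (nodSpeed H a) where
  pos t := div_pos (cos_add_sqrt_cos_sq_add_pos ha t) (by positivity)
  speed_pos t := by
    have := sqrt_pos.2 (by positivity : 0 < cos t ^ 2 + a)
    exact div_pos (cos_add_sqrt_cos_sq_add_pos ha t) (by positivity)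
  hasDerivAt_fst t := by
    have hQ := (sqrt_pos.2 (by positivity : 0 < cos t ^ 2 + a)).ne'
    refine (((hasDerivAt_cos t).add (hasDerivAt_sqrt_cos_sq_add ha t)).div_const
      (2 * |H|)).congr_deriv ?_
    rw [nodSpeed]
    field_simp
    ring
  hasDerivAt_snd t := by
    have hQ : ∀ τ, √(cos τ ^ 2 + a) ≠ 0 := fun τ => (sqrt_pos.2 (by positivity)).ne'
    have hcont : Continuous fun τ => (cos τ + √(cos τ ^ 2 + a)) * cos τ / √(cos τ ^ 2 + a) := by
      fun_prop (disch := exact hQ _)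
    refine ((hcont.integral_hasStrictDerivAt 0 t).hasDerivAt.const_mul _).congr_deriv ?_
    rw [nodSpeed]
    field_simp
  differentiable_speed t := by
    have hQ := (sqrt_pos.2 (by positivity : 0 < cos t ^ 2 + a)).ne'
    have hD := (hasDerivAt_sqrt_cos_sq_add ha t).differentiableAt
    exact ((differentiableAt_cos.add hD).div (hD.const_mul _) (by positivity))

theorem meanCurv_nodoid (hH : H ≠ 0) (ha : 0 < a) (p : ℝ × ℝ) :
    meanCurv (nodoid H a) p = |H| := by
  have hQ := (sqrt_pos.2 (by positivity : 0 < cos p.1 ^ 2 + a)).ne'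
  have hc := (cos_add_sqrt_cos_sq_add_pos ha p.1).ne'
  rw [show nodoid H a = revolution (nodx H a) (nodz H a) from rfl,
    (isAngleProfile_nodary hH ha).meanCurv_eq, nodSpeed, nodx]
  field_simp
  ring

end Nodary

theorem sin_eq_zero_iff_exists_nat_of_nonneg {t : ℝ} (ht : 0 ≤ t) :
    sin t = 0 ↔ ∃ k : ℕ, t = k * π := by
  refine ⟨fun h => ?_, fun ⟨k, hk⟩ => hk ▸ sin_nat_mul_pi k⟩
  obtain ⟨n, rfl⟩ := sin_eq_zero_iff.1 h
  have hn : 0 ≤ n := by exact_mod_cast nonneg_of_mul_nonneg_left ht pi_pos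
  exact ⟨n.toNat, by rw [← Int.cast_natCast, Int.toNat_of_nonneg hn]⟩

theorem cos_eq_zero_iff_exists_nat_of_nonneg {t : ℝ} (ht : 0 ≤ t) :
    cos t = 0 ↔ ∃ k : ℕ, t = π / 2 + k * π := by
  refine ⟨fun h => ?_, fun ⟨k, hk⟩ => cos_eq_zero_iff.2 ⟨k, by rw [hk]; push_cast; ring⟩⟩
  obtain ⟨n, rfl⟩ := cos_eq_zero_iff.1 h
  have hn : (-1 : ℤ) < n := by exact_mod_cast (show (-1 : ℝ) < n by nlinarith [pi_pos])
  exact ⟨n.toNat, by rw [← Int.cast_natCast, Int.toNat_of_nonneg (by omega)]; ring⟩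

/-- For each fixed `v ∈ ℝ³`, the function `ψ = ⟨v,N⟩` on the nodoid satisfies the
Jacobi equation `Δψ + ‖S‖²ψ = 0` with `‖S‖² = 4H² − 2K`; moreover `ψ = ⟨e₃,N⟩`
vanishes on the boundary `∂N_{t₀}` iff `t₀ ∈ πℕ`, while `ψ = ⟨eᵢ,N⟩`, `i = 1,2`,
vanishes on the boundary iff `t₀ ∈ π/2 + πℕ`. -/
theorem nodoid_jacobi_fields_and_boundary_vanishing
    (H a : ℝ) (hH : H ≠ 0) (ha : 0 < a) :
    (∀ v : R3, ∀ p : ℝ × ℝ,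
        laplaceBeltrami (nodoid H a) (fun q => dot3 v (nodN q)) p +
          (4 * H ^ 2 - 2 * gaussCurv (nodoid H a) p) * dot3 v (nodN p) = 0) ∧
    (∀ t₀ : ℝ, 0 < t₀ →
      ((∀ θ : ℝ, dot3 e3 (nodN (t₀, θ)) = 0 ∧ dot3 e3 (nodN (-t₀, θ)) = 0) ↔
        ∃ k : ℕ, t₀ = k * π)) ∧
    (∀ t₀ : ℝ, 0 < t₀ →
      ((∀ θ : ℝ, dot3 e1 (nodN (t₀, θ)) = 0 ∧ dot3 e1 (nodN (-t₀, θ)) = 0 ∧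
          dot3 e2 (nodN (t₀, θ)) = 0 ∧ dot3 e2 (nodN (-t₀, θ)) = 0) ↔
        ∃ k : ℕ, t₀ = π / 2 + k * π)) := by
  refine ⟨fun v => ?_, fun t₀ ht₀ => ?_, fun t₀ ht₀ => ?_⟩
  · rw [← sq_abs H]
    exact (isAngleProfile_nodary hH ha).isJacobiField_dot3_nodN (meanCurv_nodoid hH ha) v
  · rw [← sin_eq_zero_iff_exists_nat_of_nonneg ht₀.le]
    simp [dot3, e3, nodN]
  · rw [← cos_eq_zero_iff_exists_nat_of_nonneg ht₀.le]
    exact ⟨fun h => by simpa [dot3, e1, nodN] using (h 0).1,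
      fun h θ => by simp [dot3, e1, e2, nodN, h]⟩
end
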